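/- arXiv:2105.13301 — 4 statements merged into one kernel-verified Lean document; each statement's English description precedes it below -/
import Mathlib

section
/- The convolution of two log-concave sequences supported on the integers is log-concave: if (a_k) and (b_k) are nonnegative log-concave sequences on ℤ with contiguous support, then c_k = Σ_j a_j b_{k−j} satisfies c_k² ≥ c_{k−1} c_{k+1} for all k. -/
/-!
For a nonnegative log-concave sequence without internal zeros the ratio `a (t + 1) / a t`
is nonincreasing on the support, i.e. `a s * a (t + 1) ≤ a (s + 1) * a t` whenever `s ≤ t`.
With `c m = ∑' j, a j * b (m - j)`, expand `c (k - 1) * c (k + 1)` and `c k ^ 2` as sums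
over `ℤ × ℤ`, shifting the former by `(p, q) ↦ (p - 1, q + 1)`. Pairing the index `(p, q)`
with `(q + 1, p - 1)`, the two summands of `c k ^ 2` exceed those of `c (k - 1) * c (k + 1)` by
`(a p * a q - a (p - 1) * a (q + 1)) * (b (k - p) * b (k - q) - b (k - q - 1) * b (k - p + 1))`,
and by the ratio monotonicity of `a` and `b` both factors have the sign of `q + 1 - p`.
-/

/-- Pólya frequency of order two, in the adjacent form; for a nonnegative sequence this is
log-concavity without internal zeros. -/
def IsPF2 (a : ℤ → ℝ) : Prop :=
  ∀ ⦃s t : ℤ⦄, s ≤ t → a s * a (t + 1) ≤ a (s + 1) * a t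

theorem IsPF2.of_logConcave {a : ℤ → ℝ} (ha0 : ∀ k, 0 ≤ a k)
    (halc : ∀ k, a (k - 1) * a (k + 1) ≤ a k ^ 2)
    (hacont : ∀ j k l : ℤ, j ≤ k → k ≤ l → 0 < a j → 0 < a l → 0 < a k) : IsPF2 a := by
  intro s t hst
  induction t, hst using Int.leInduction with
  | base => rw [mul_comm]
  | succ t hst ih =>
    rcases (ha0 s).eq_or_lt with hs | hs
    · rw [← hs, zero_mul]; exact mul_nonneg (ha0 _) (ha0 _)
    rcases (ha0 (t + 1 + 1)).eq_or_lt with ht | ht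
    · rw [← ht, mul_zero]; exact mul_nonneg (ha0 _) (ha0 _)
    have hat : 0 < a t := hacont s t (t + 1 + 1) hst (by omega) hs ht
    have hlc : a t * a (t + 1 + 1) ≤ a (t + 1) ^ 2 := by simpa using halc (t + 1)
    refine le_of_mul_le_mul_right ?_ hat
    calc a s * a (t + 1 + 1) * a t = a s * (a t * a (t + 1 + 1)) := by ring
      _ ≤ a s * a (t + 1) ^ 2 := mul_le_mul_of_nonneg_left hlc hs.le
      _ = a s * a (t + 1) * a (t + 1) := by ring
      _ ≤ a (s + 1) * a t * a (t + 1) := mul_le_mul_of_nonneg_right ih (ha0 _)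
      _ = a (s + 1) * a (t + 1) * a t := by ring

theorem IsPF2.sub_mul_sub_nonneg {a b : ℤ → ℝ} (ha : IsPF2 a) (hb : IsPF2 b) {p q p' q' : ℤ}
    (h : p - q = p' - q') :
    0 ≤ (a p * a q - a (p - 1) * a (q + 1)) * (b p' * b q' - b (p' - 1) * b (q' + 1)) := by
  rcases le_total p (q + 1) with hpq | hqp
  · have ha' := ha (show p - 1 ≤ q by omega)
    have hb' := hb (show p' - 1 ≤ q' by omega)
    simp only [sub_add_cancel] at ha' hb'
    exact mul_nonneg (by linarith) (by linarith)
  · have ha' := ha (show q ≤ p - 1 by omega)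
    have hb' := hb (show q' ≤ p' - 1 by omega)
    simp only [sub_add_cancel] at ha' hb'
    exact mul_nonneg_of_nonpos_of_nonpos (by linarith) (by linarith)

theorem tsum_le_tsum_of_add_comp_le {α : Type*} {f g : α → ℝ} (σ : α ≃ α)
    (hf : Summable f) (hg : Summable g) (h : ∀ x, f x + f (σ x) ≤ g x + g (σ x)) :
    ∑' x, f x ≤ ∑' x, g x := by
  have hfσ : Summable fun x => f (σ x) := hf.comp_injective σ.injective
  have hgσ : Summable fun x => g (σ x) := hg.comp_injective σ.injective
  have hle := (hf.add hfσ).tsum_le_tsum h (hg.add hgσ)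
  rw [hf.tsum_add hfσ, hg.tsum_add hgσ, σ.tsum_eq f, σ.tsum_eq g] at hle
  linarith

theorem summable_mul_comp_sub {G : Type*} [AddGroup G] {a b : G → ℝ} (ha0 : 0 ≤ a) (hb0 : 0 ≤ b)
    (haS : Summable a) (hbS : Summable b) (m : G) : Summable fun j => a j * b (m - j) :=
  (haS.mul_of_nonneg hbS ha0 hb0).comp_injective (i := fun j => (j, m - j))
    fun _ _ h => congrArg Prod.fst h

theorem IsPF2.convolution_mul_convolution_le_sq {a b : ℤ → ℝ} (ha0 : 0 ≤ a) (hb0 : 0 ≤ b)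
    (haS : Summable a) (hbS : Summable b) (ha : IsPF2 a) (hb : IsPF2 b) (k : ℤ) :
    (∑' j, a j * b (k - 1 - j)) * (∑' j, a j * b (k + 1 - j)) ≤ (∑' j, a j * b (k - j)) ^ 2 := by
  have hc : ∀ m, Summable fun j => a j * b (m - j) := summable_mul_comp_sub ha0 hb0 haS hbS
  have hc0 : ∀ m, 0 ≤ fun j => a j * b (m - j) := fun m j => mul_nonneg (ha0 j) (hb0 _)
  have hcc : ∀ m n, Summable fun x : ℤ × ℤ => a x.1 * b (m - x.1) * (a x.2 * b (n - x.2)) :=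
    fun m n => (hc m).mul_of_nonneg (hc n) (hc0 m) (hc0 n)
  let shift : ℤ × ℤ ≃ ℤ × ℤ := (Equiv.subRight 1).prodCongr (Equiv.addRight 1)
  let swap : ℤ × ℤ ≃ ℤ × ℤ :=
    (Equiv.prodComm ℤ ℤ).trans ((Equiv.addRight 1).prodCongr (Equiv.subRight 1))
  rw [sq, (hc _).tsum_mul_tsum (hc _) (hcc _ _), (hc _).tsum_mul_tsum (hc _) (hcc _ _),
    ← shift.tsum_eq]
  refine tsum_le_tsum_of_add_comp_le swap ((hcc _ _).comp_injective shift.injective) (hcc _ _)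
    fun ⟨p, q⟩ => ?_
  have key := ha.sub_mul_sub_nonneg hb (p := p) (q := q) (p' := k - q) (q' := k - p) (by ring)
  simp only [shift, swap, Equiv.trans_apply, Equiv.prodComm_apply, Prod.swap_prod_mk,
    Equiv.prodCongr_apply, Prod.map_apply, Equiv.coe_addRight, Equiv.subRight_apply]
  ring_nf at key ⊢
  linarith

/-- The convolution of two log-concave sequences supported on the integers is log-concave:
if (a_k) and (b_k) are nonnegative log-concave sequences on ℤ with contiguous support,
then c_k = Σ_j a_j b_{k−j} satisfies c_k² ≥ c_{k−1} c_{k+1} for all k. -/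
theorem convolution_log_concave (a b : ℤ → ℝ)
    (ha0 : ∀ k, 0 ≤ a k) (hb0 : ∀ k, 0 ≤ b k)
    (haS : Summable a) (hbS : Summable b)
    (halc : ∀ k, a (k - 1) * a (k + 1) ≤ (a k) ^ 2)
    (hblc : ∀ k, b (k - 1) * b (k + 1) ≤ (b k) ^ 2)
    (hacont : ∀ j k l : ℤ, j ≤ k → k ≤ l → 0 < a j → 0 < a l → 0 < a k)
    (hbcont : ∀ j k l : ℤ, j ≤ k → k ≤ l → 0 < b j → 0 < b l → 0 < b k)
    (k : ℤ) :
    (∑' j : ℤ, a j * b (k - 1 - j)) * (∑' j : ℤ, a j * b (k + 1 - j))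
      ≤ (∑' j : ℤ, a j * b (k - j)) ^ 2 :=
  IsPF2.convolution_mul_convolution_le_sq ha0 hb0 haS hbS (.of_logConcave ha0 halc hacont)
    (.of_logConcave hb0 hblc hbcont) k
end

section
/- Let X = Σ_{i=1}^n a_i ξ_i where (ξ_1, ..., ξ_n) is uniform on the set of 0/1 vectors with exactly s ones, and let η² = Σ a_i² − (Σ a_i)²/n. Then for every t ≥ 0, P[|X − E X| ≥ t] ≤ 2 exp(−t²/(4η²)). -/
/-!
The moment generating function of `X` satisfies `E exp (l X) ≤ exp (l μ + l² η²)` with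
`μ = (s / n) ∑ aᵢ`. Over `s`-subsets `A` of a ground set this is a bound on
`∑_A exp (∑_{i ∈ A} bᵢ)`, proved by induction on the ground set: adding an element splits the
subsets into those avoiding and those containing it (Pascal's rule), and the resulting two-point
average is controlled by `p eᵘ + 1 - p ≤ exp (p u + u² / 2)`. Jensen's inequality then forces
`E X = μ`, and the tail bound is Chernoff's bound at `l = t / (2 η²)`.
-/

open scoped Classical

open Real Finset

lemma mul_exp_add_one_sub_le_exp {p : ℝ} (hp0 : 0 ≤ p) (hp1 : p ≤ 1) (u : ℝ) :
    p * exp u + (1 - p) ≤ exp (p * u + u ^ 2 / 2) := by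
  set q := 1 - p
  have hq0 : 0 ≤ q := by linarith
  -- after centring, convexity of `exp` between `0` and `±u` reduces this to `cosh u ≤ exp (u² / 2)`
  have h₁ : exp (q * u) ≤ q * exp u + p := by
    simpa using convexOn_exp.2 (Set.mem_univ u) (Set.mem_univ 0) hq0 hp0 (by ring)
  have h₂ : exp (-(p * u)) ≤ p * exp (-u) + q := by
    simpa [mul_comm] using convexOn_exp.2 (Set.mem_univ (-u)) (Set.mem_univ 0) hp0 hq0 (by ring)
  have hcosh : exp u + exp (-u) ≤ 2 * exp (u ^ 2 / 2) := by
    linarith [cosh_le_exp_half_sq u, cosh_eq u]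
  have hone : 1 ≤ exp (u ^ 2 / 2) := one_le_exp (by positivity)
  have hcentered : p * exp (q * u) + q * exp (-(p * u)) ≤ exp (u ^ 2 / 2) :=
    calc p * exp (q * u) + q * exp (-(p * u))
        ≤ p * (q * exp u + p) + q * (p * exp (-u) + q) := by gcongr
      _ = p * q * (exp u + exp (-u)) + (p ^ 2 + q ^ 2) := by ring
      _ ≤ p * q * (2 * exp (u ^ 2 / 2)) + (p ^ 2 + q ^ 2) * exp (u ^ 2 / 2) := by
        gcongr
        exact le_mul_of_one_le_right (by positivity) hone
      _ = exp (u ^ 2 / 2) := by rw [show q = 1 - p from rfl]; ring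
  have e₁ : exp (p * u) * exp (q * u) = exp u := by rw [← exp_add]; congr 1; simp only [q]; ring
  have e₂ : exp (p * u) * exp (-(p * u)) = 1 := by rw [← exp_add]; simp
  calc p * exp u + q
      = exp (p * u) * (p * exp (q * u) + q * exp (-(p * u))) := by
        linear_combination (-p) * e₁ - q * e₂
    _ ≤ exp (p * u) * exp (u ^ 2 / 2) := by gcongr
    _ = exp (p * u + u ^ 2 / 2) := (exp_add _ _).symm

lemma eq_zero_of_forall_mul_le_sq_mul {c v : ℝ} (h : ∀ l : ℝ, l * c ≤ l ^ 2 * v) : c = 0 := by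
  set w := |v| + 1
  have hw : 0 < w := by positivity
  have hv : v ≤ w := by linarith [le_abs_self v]
  have : c ^ 2 / (2 * w) ≤ c ^ 2 / (4 * w) := by
    calc c ^ 2 / (2 * w) = c / (2 * w) * c := by ring
      _ ≤ (c / (2 * w)) ^ 2 * v := h _
      _ ≤ (c / (2 * w)) ^ 2 * w := by gcongr
      _ = c ^ 2 / (4 * w) := by field_simp; ring
  have : c ^ 2 ≤ 0 := by
    rw [div_le_div_iff₀ (by positivity) (by positivity)] at this
    nlinarith
  exact pow_eq_zero_iff two_ne_zero |>.1 (le_antisymm this (sq_nonneg c))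

section ExpMoment

variable {α : Type*} {T : Finset α} {X : α → ℝ} {m v : ℝ}

lemma card_mul_exp_mul_mean_le_sum_exp (hT : T.Nonempty) (l : ℝ) :
    #T * exp (l * ((∑ x ∈ T, X x) / #T)) ≤ ∑ x ∈ T, exp (l * X x) := by
  have hc : (#T : ℝ) ≠ 0 := by exact_mod_cast hT.card_pos.ne'
  set μ := (∑ x ∈ T, X x) / #T
  have hcentered : ∑ x ∈ T, (X x - μ) = 0 := by
    rw [sum_sub_distrib, sum_const, nsmul_eq_mul, mul_div_cancel₀ _ hc, sub_self]
  calc #T * exp (l * μ) = ∑ x ∈ T, exp (l * μ) * (l * (X x - μ) + 1) := by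
        rw [← mul_sum, sum_add_distrib, ← mul_sum, hcentered]; simp [mul_comm]
    _ ≤ ∑ x ∈ T, exp (l * μ) * exp (l * (X x - μ)) := by
        gcongr with x; exact add_one_le_exp _
    _ = ∑ x ∈ T, exp (l * X x) := by
        congr! 1 with x; rw [← exp_add]; ring_nf

lemma sum_div_card_eq_of_sum_exp_le (hT : T.Nonempty)
    (hmgf : ∀ l : ℝ, ∑ x ∈ T, exp (l * X x) ≤ #T * exp (l * m + l ^ 2 * v)) :
    (∑ x ∈ T, X x) / #T = m := by
  have hc : (0 : ℝ) < #T := by exact_mod_cast hT.card_pos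
  have h : ∀ l : ℝ, l * ((∑ x ∈ T, X x) / #T - m) ≤ l ^ 2 * v := fun l => by
    have := le_of_mul_le_mul_left ((card_mul_exp_mul_mean_le_sum_exp hT l).trans (hmgf l)) hc
    linarith [exp_le_exp.1 this]
  linarith [eq_zero_of_forall_mul_le_sq_mul h]

lemma card_filter_le_sub_le_of_sum_exp_le
    (hmgf : ∀ l : ℝ, ∑ x ∈ T, exp (l * X x) ≤ #T * exp (l * m + l ^ 2 * v)) {t : ℝ} (ht : 0 ≤ t) :
    (#{x ∈ T | t ≤ X x - m} : ℝ) ≤ #T * exp (-t ^ 2 / (4 * v)) := by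
  -- for `v ≤ 0` the bound is trivial since `-t² / (4 v) ≥ 0` (at `v = 0` because `x / 0 = 0`)
  rcases le_or_gt v 0 with hv | hv
  · have : 0 ≤ -t ^ 2 / (4 * v) := div_nonneg_of_nonpos (by nlinarith) (by linarith)
    calc (#{x ∈ T | t ≤ X x - m} : ℝ) ≤ #T := by exact_mod_cast card_filter_le _ _
      _ ≤ #T * exp (-t ^ 2 / (4 * v)) := le_mul_of_one_le_right (by positivity) (one_le_exp this)
  -- Chernoff's bound with the optimal parameter `l = t / (2 v)`
  set l := t / (2 * v)
  have hl : 0 ≤ l := by positivity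
  have hexp : -t ^ 2 / (4 * v) = l ^ 2 * v - l * t := by simp only [l]; field_simp; ring
  have hmarkov : (#{x ∈ T | t ≤ X x - m} : ℝ) * exp (l * t) ≤ #T * exp (l ^ 2 * v) :=
    calc (#{x ∈ T | t ≤ X x - m} : ℝ) * exp (l * t)
        = ∑ x ∈ T with t ≤ X x - m, exp (l * t) := by rw [sum_const, nsmul_eq_mul]
      _ ≤ ∑ x ∈ T with t ≤ X x - m, exp (l * X x - l * m) := by
          gcongr with x hx
          nlinarith [(mem_filter.1 hx).2]
      _ ≤ ∑ x ∈ T, exp (l * X x - l * m) :=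
          sum_le_sum_of_subset_of_nonneg (filter_subset _ _) fun _ _ _ => (exp_pos _).le
      _ = exp (-(l * m)) * ∑ x ∈ T, exp (l * X x) := by
          rw [mul_sum]; congr! 1 with x; rw [← exp_add]; ring_nf
      _ ≤ exp (-(l * m)) * (#T * exp (l * m + l ^ 2 * v)) := by gcongr; exact hmgf l
      _ = #T * exp (l ^ 2 * v) := by rw [mul_left_comm, ← exp_add]; ring_nf
  rw [hexp, exp_sub, ← mul_div_assoc, le_div_iff₀ (exp_pos _)]
  exact hmarkov

lemma card_filter_le_abs_sub_le_of_sum_exp_le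
    (hmgf : ∀ l : ℝ, ∑ x ∈ T, exp (l * X x) ≤ #T * exp (l * m + l ^ 2 * v)) {t : ℝ} (ht : 0 ≤ t) :
    (#{x ∈ T | t ≤ |X x - m|} : ℝ) ≤ 2 * #T * exp (-t ^ 2 / (4 * v)) := by
  have hmgf_neg : ∀ l : ℝ, ∑ x ∈ T, exp (l * -X x) ≤ #T * exp (l * -m + l ^ 2 * v) := fun l => by
    simpa only [mul_neg, neg_mul, neg_sq] using hmgf (-l)
  have hsplit : {x ∈ T | t ≤ |X x - m|} ⊆ {x ∈ T | t ≤ X x - m} ∪ {x ∈ T | t ≤ -X x - -m} := by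
    intro x hx
    rw [mem_filter] at hx
    rw [filter_union_right, mem_filter, neg_sub_neg]
    exact ⟨hx.1, (le_abs.1 hx.2).imp_right (neg_sub (X x) m ▸ id)⟩
  calc (#{x ∈ T | t ≤ |X x - m|} : ℝ)
      ≤ #{x ∈ T | t ≤ X x - m} + #{x ∈ T | t ≤ -X x - -m} := by
        exact_mod_cast (card_le_card hsplit).trans (card_union_le _ _)
    _ ≤ #T * exp (-t ^ 2 / (4 * v)) + #T * exp (-t ^ 2 / (4 * v)) :=
        add_le_add (card_filter_le_sub_le_of_sum_exp_le hmgf ht)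
          (card_filter_le_sub_le_of_sum_exp_le hmgf_neg ht)
    _ = 2 * #T * exp (-t ^ 2 / (4 * v)) := by ring

end ExpMoment

theorem Finset.sum_powersetCard_succ_insert {ι M : Type*} [DecidableEq ι] [AddCommMonoid M]
    {j : ι} {F : Finset ι} (hj : j ∉ F) (k : ℕ) (f : Finset ι → M) :
    ∑ A ∈ powersetCard (k + 1) (insert j F), f A =
      ∑ A ∈ powersetCard (k + 1) F, f A + ∑ A ∈ powersetCard k F, f (insert j A) := by
  have hjA : ∀ A ∈ powersetCard k F, j ∉ A := fun A hA h => hj ((mem_powersetCard.1 hA).1 h)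
  rw [powersetCard_succ_insert hj, sum_union, sum_image]
  · intro A hA A' hA' h
    rw [← erase_insert (hjA A hA), ← erase_insert (hjA A' hA'), h]
  · refine disjoint_left.2 fun A hA hA' => ?_
    obtain ⟨A', -, rfl⟩ := mem_image.1 hA'
    exact hj ((mem_powersetCard.1 hA).1 (mem_insert_self j A'))

noncomputable def sliceMGFBound (N s : ℕ) (B Q : ℝ) : ℝ :=
  N.choose s * exp (s / N * B + (Q - B ^ 2 / N))

lemma sliceMGFBound_succ_add_le {N k : ℕ} (hk : k ≤ N) {B : ℝ} (hB : N = 0 → B = 0) (Q v : ℝ) :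
    sliceMGFBound N (k + 1) B Q + exp v * sliceMGFBound N k B Q ≤
      sliceMGFBound (N + 1) (k + 1) (B + v) (Q + v ^ 2) := by
  unfold sliceMGFBound
  rcases Nat.eq_zero_or_pos N with rfl | hN
  · obtain rfl := Nat.le_zero.1 hk
    simp [hB rfl, ← exp_add]
  have hN1 : (1 : ℝ) ≤ N := by exact_mod_cast hN
  set C : ℝ := ↑((N + 1).choose (k + 1))
  set p : ℝ := (k + 1) / (N + 1)
  have hp0 : 0 ≤ p := by positivity
  have hp1 : p ≤ 1 := div_le_one_of_le₀ (by exact_mod_cast Nat.succ_le_succ hk) (by positivity)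
  -- Pascal's rule splits `C` in the proportions `p` and `1 - p`
  have hC₁ : (N.choose k : ℝ) = p * C := by
    have : ((N : ℝ) + 1) * N.choose k = C * (k + 1) := by
      simp only [C]; exact_mod_cast Nat.add_one_mul_choose_eq N k
    rw [div_mul_eq_mul_div, eq_div_iff (by positivity)]
    linear_combination this
  have hC₂ : (N.choose (k + 1) : ℝ) = (1 - p) * C := by
    have : C = N.choose k + N.choose (k + 1) := by
      simp only [C]; rw [Nat.choose_succ_succ']; push_cast; ring
    linarith
  set L := (k + 1) / N * B + (Q - B ^ 2 / N)
  set u := v - B / N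
  push_cast
  rw [hC₁, hC₂]
  calc (1 - p) * C * exp L + exp v * (p * C * exp (k / N * B + (Q - B ^ 2 / N)))
      = C * ((p * exp u + (1 - p)) * exp L) := by
        have : exp v * exp (k / N * B + (Q - B ^ 2 / N)) = exp u * exp L := by
          rw [← exp_add, ← exp_add]; congr 1; simp only [u, L]; ring
        linear_combination (p * C) * this
    _ ≤ C * (exp (p * u + u ^ 2 / 2) * exp L) := by
        gcongr; exact mul_exp_add_one_sub_le_exp hp0 hp1 u
    _ ≤ C * (exp (p * u + N / (N + 1) * u ^ 2) * exp L) := by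
        have : (1 : ℝ) / 2 ≤ N / (N + 1) := by
          rw [div_le_div_iff₀ (by norm_num) (by positivity)]; linarith
        gcongr
        nlinarith [sq_nonneg u]
    -- adding `v` to `B` raises the exponent `L` by exactly `p u + N / (N + 1) u²`
    _ = _ := by rw [← exp_add]; congr 2; simp only [L, u, p]; field_simp; ring

lemma sliceMGFBound_nonneg (N s : ℕ) (B Q : ℝ) : 0 ≤ sliceMGFBound N s B Q := by
  unfold sliceMGFBound; positivity

theorem sum_powersetCard_exp_le_sliceMGFBound {ι : Type*} [DecidableEq ι] (b : ι → ℝ)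
    (F : Finset ι) (s : ℕ) :
    ∑ A ∈ powersetCard s F, exp (∑ i ∈ A, b i) ≤
      sliceMGFBound #F s (∑ i ∈ F, b i) (∑ i ∈ F, b i ^ 2) := by
  induction F using Finset.induction_on generalizing s with
  | empty =>
    rcases s with _ | k
    · simp [sliceMGFBound]
    · simp [sliceMGFBound, powersetCard_eq_empty.2 (card_empty.trans_lt k.succ_pos)]
  | insert j F hj ih =>
    rcases s with _ | k
    · have hcs : (∑ i ∈ insert j F, b i) ^ 2 / #(insert j F) ≤ ∑ i ∈ insert j F, b i ^ 2 :=
        div_le_of_le_mul₀ (by positivity) (by positivity)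
          (sq_sum_le_card_mul_sum_sq.trans_eq (mul_comm _ _))
      simpa [sliceMGFBound] using one_le_exp (sub_nonneg.2 hcs)
    rw [card_insert_of_notMem hj, sum_insert hj, sum_insert hj, add_comm (b j), add_comm (b j ^ 2)]
    by_cases hk : k ≤ #F
    swap
    · rw [powersetCard_eq_empty.2 (by rw [card_insert_of_notMem hj]; omega), sum_empty]
      exact sliceMGFBound_nonneg _ _ _ _
    have hinsert : ∀ A ∈ powersetCard k F,
        exp (∑ i ∈ insert j A, b i) = exp (b j) * exp (∑ i ∈ A, b i) := fun A hA => by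
      rw [sum_insert fun h => hj ((mem_powersetCard.1 hA).1 h), exp_add]
    rw [sum_powersetCard_succ_insert hj, sum_congr rfl hinsert, ← mul_sum]
    calc _ ≤ sliceMGFBound #F (k + 1) (∑ i ∈ F, b i) (∑ i ∈ F, b i ^ 2) +
          exp (b j) * sliceMGFBound #F k (∑ i ∈ F, b i) (∑ i ∈ F, b i ^ 2) := by
          gcongr
          · exact ih _
          · exact ih _
      _ ≤ _ := sliceMGFBound_succ_add_le hk (fun h => by simp [card_eq_zero.1 h]) _ _

lemma sum_slice_eq_sum_powersetCard {ι M : Type*} [Fintype ι] [DecidableEq ι] [AddCommMonoid M]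
    (s : ℕ) (h : Finset ι → M) :
    ∑ x ∈ (univ : Finset (ι → Bool)) with #{i | x i = true} = s,
        h ({i | x i = true} : Finset ι) =
      ∑ A ∈ powersetCard s univ, h A := by
  refine sum_nbij' (fun x => ({i | x i = true} : Finset ι)) (fun A i => decide (i ∈ A))
    ?_ ?_ ?_ ?_ ?_
  · intro x hx
    simpa [mem_powersetCard] using hx
  · intro A hA
    simpa using (mem_powersetCard.1 hA).2
  · intro x _
    funext i
    simp
  · intro A _
    ext i
    simp
  · intro x _
    rfl

/-- Azuma–Hoeffding type concentration on the slice: if X = Σ a_i ξ_i with ξ uniform on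
the 0/1 vectors with exactly s ones and η² = Σ a_i² − (Σ a_i)²/n, then
P[|X − E X| ≥ t] ≤ 2 exp(−t²/(4η²)). -/
theorem slice_subgaussian (n s : ℕ) (hs : s ≤ n) (a : Fin n → ℝ) (t : ℝ) (ht : 0 ≤ t) :
    let T : Finset (Fin n → Bool) :=
      Finset.univ.filter fun x => (Finset.univ.filter fun i => x i = true).card = s
    let X : (Fin n → Bool) → ℝ := fun x => ∑ i, if x i then a i else 0
    let EX : ℝ := (∑ x ∈ T, X x) / T.card
    let η2 : ℝ := ∑ i, (a i) ^ 2 - (∑ i, a i) ^ 2 / n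
    ((T.filter fun x => t ≤ |X x - EX|).card : ℝ) / T.card
      ≤ 2 * Real.exp (-t ^ 2 / (4 * η2)) := by
  intro T X EX η2
  have hsum (g : ℝ → ℝ) : ∑ x ∈ T, g (X x) = ∑ A ∈ powersetCard s univ, g (∑ i ∈ A, a i) := by
    simp only [T, X, ← sum_filter]
    exact sum_slice_eq_sum_powersetCard s fun A => g (∑ i ∈ A, a i)
  have hcard : (#T : ℝ) = n.choose s := by simpa using hsum fun _ => 1
  have hT : T.Nonempty := by
    rw [← card_pos, ← Nat.cast_pos (α := ℝ), hcard]; exact_mod_cast Nat.choose_pos hs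
  have hmgf (l : ℝ) :
      ∑ x ∈ T, exp (l * X x) ≤ #T * exp (l * (s / n * ∑ i, a i) + l ^ 2 * η2) := by
    have := sum_powersetCard_exp_le_sliceMGFBound (fun i => l * a i) univ s
    simp only [← mul_sum, mul_pow, card_univ, Fintype.card_fin] at this
    rw [hsum fun y => exp (l * y), hcard]
    refine this.trans_eq ?_
    unfold sliceMGFBound
    congr 2
    ring
  have hEX : EX = s / n * ∑ i, a i := sum_div_card_eq_of_sum_exp_le hT hmgf
  rw [hEX]
  exact div_le_of_le_mul₀ (by positivity) (by positivity)
    ((card_filter_le_abs_sub_le_of_sum_exp_le hmgf ht).trans_eq (by ring))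
end

section
/- Let X = Σ_{i=1}^n a_i ξ_i where (ξ_1, ..., ξ_n) is uniform on the set of 0/1 vectors with exactly s ones, and suppose η² = Σ a_i² − (Σ a_i)²/n. Then E exp(X − E X) ≤ 2 exp(C η²) for some absolute constant C. -/
/-!
Swapping two coordinates is an involution of the slice, so `(x, x ∘ swap i j)` is an
exchangeable pair. Summed over all ordered pairs `(i, j)`, the increments
`X x - X (x ∘ swap i j)` add up to `2n (X x - E X)`, and their squares to at most `2n η²`.
Antisymmetrising over the pair and bounding `(u - v)(eᵘ - eᵛ)` termwise gives
`E[(X - E X) e^{λ(X - E X)}] ≤ λ (η²/2) E[e^{λ(X - E X)}]` for `λ ≥ 0`, and Herbst's argument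
(`λ ↦ E e^{λ(X - E X) - λ²η²/4}` is nonincreasing) gives `E e^{X - E X} ≤ e^{η²/4}`.
-/

open Finset Real

theorem Real.two_mul_exp_sub_one_le {t : ℝ} (ht : 0 ≤ t) :
    2 * (exp t - 1) ≤ t * (exp t + 1) := by
  let F : ℝ → ℝ := fun u => u * (exp u + 1) - 2 * (exp u - 1)
  have hF : ∀ u, HasDerivAt F (1 - exp u + u * exp u) u := fun u =>
    (((hasDerivAt_id' u).mul ((hasDerivAt_exp u).add_const 1)).sub
      (((hasDerivAt_exp u).sub_const 1).const_mul 2)).congr_deriv (by ring)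
  have hF_mono : Monotone F := monotone_of_deriv_nonneg (fun u => (hF u).differentiableAt)
    fun u => by
      rw [(hF u).deriv]
      nlinarith [add_one_le_exp (-u), exp_pos u, exp_neg u, mul_inv_cancel₀ (exp_pos u).ne']
  simpa [F] using hF_mono ht

-- The logarithmic mean of `eᵘ` and `eᵛ` is at most their arithmetic mean.
theorem Real.sub_mul_exp_sub_exp_le {l : ℝ} (hl : 0 ≤ l) (u v : ℝ) :
    (u - v) * (exp (l * u) - exp (l * v))
      ≤ l / 2 * (u - v) ^ 2 * (exp (l * u) + exp (l * v)) := by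
  wlog huv : v ≤ u with H
  · linarith [H hl v u (by linarith)]
  have hd : 0 ≤ u - v := sub_nonneg.2 huv
  have hscaled := mul_le_mul_of_nonneg_left (two_mul_exp_sub_one_le (mul_nonneg hl hd))
    (mul_nonneg hd (exp_pos (l * v)).le)
  have hsplit : exp (l * u) = exp (l * (u - v)) * exp (l * v) := by rw [← exp_add]; ring_nf
  rw [hsplit]
  nlinarith

section Exchangeable

variable {α κ : Type*} [Fintype κ] {T : Finset α} {φ : κ → α → α}

theorem sum_sum_involutive_flip (hT : ∀ k, ∀ x ∈ T, φ k x ∈ T)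
    (hφ : ∀ k, Function.Involutive (φ k)) (g : α → α → ℝ) :
    ∑ x ∈ T, ∑ k, g x (φ k x) = ∑ x ∈ T, ∑ k, g (φ k x) x := by
  rw [sum_comm, sum_comm (s := T)]
  refine sum_congr rfl fun k _ => ?_
  exact sum_nbij' (φ k) (φ k) (hT k) (hT k) (fun x _ => hφ k x) (fun x _ => hφ k x)
    fun x _ => by rw [hφ k x]

theorem sum_sum_sub_involutive_eq_zero (hT : ∀ k, ∀ x ∈ T, φ k x ∈ T)
    (hφ : ∀ k, Function.Involutive (φ k)) (Y : α → ℝ) :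
    ∑ x ∈ T, ∑ k, (Y x - Y (φ k x)) = 0 := by
  have h := sum_sum_involutive_flip hT hφ fun u v => Y u - Y v
  have hneg : ∑ x ∈ T, ∑ k, (Y (φ k x) - Y x) = -∑ x ∈ T, ∑ k, (Y x - Y (φ k x)) := by
    simp only [← sum_neg_distrib, neg_sub]
  linarith

theorem sum_sum_sub_involutive_mul_exp_le (hT : ∀ k, ∀ x ∈ T, φ k x ∈ T)
    (hφ : ∀ k, Function.Involutive (φ k)) (Y : α → ℝ) {l : ℝ} (hl : 0 ≤ l) :
    ∑ x ∈ T, ∑ k, (Y x - Y (φ k x)) * exp (l * Y x)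
      ≤ l / 2 * ∑ x ∈ T, ∑ k, (Y x - Y (φ k x)) ^ 2 * exp (l * Y x) := by
  have hlin := sum_sum_involutive_flip hT hφ fun u v => (Y u - Y v) * exp (l * Y u)
  have hsq := sum_sum_involutive_flip hT hφ fun u v => (Y u - Y v) ^ 2 * exp (l * Y u)
  have hterm : ∑ x ∈ T, ∑ k, (Y x - Y (φ k x)) * (exp (l * Y x) - exp (l * Y (φ k x)))
      ≤ ∑ x ∈ T, ∑ k,
          l / 2 * (Y x - Y (φ k x)) ^ 2 * (exp (l * Y x) + exp (l * Y (φ k x))) :=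
    sum_le_sum fun x _ => sum_le_sum fun k _ => sub_mul_exp_sub_exp_le hl _ _
  have hlhs : ∑ x ∈ T, ∑ k, (Y x - Y (φ k x)) * (exp (l * Y x) - exp (l * Y (φ k x)))
      = ∑ x ∈ T, ∑ k, (Y x - Y (φ k x)) * exp (l * Y x)
        + ∑ x ∈ T, ∑ k, (Y (φ k x) - Y x) * exp (l * Y (φ k x)) := by
    simp only [← sum_add_distrib]
    exact sum_congr rfl fun x _ => sum_congr rfl fun k _ => by ring
  have hrhs : ∑ x ∈ T, ∑ k,
        l / 2 * (Y x - Y (φ k x)) ^ 2 * (exp (l * Y x) + exp (l * Y (φ k x)))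
      = l / 2 * (∑ x ∈ T, ∑ k, (Y x - Y (φ k x)) ^ 2 * exp (l * Y x)
        + ∑ x ∈ T, ∑ k, (Y (φ k x) - Y x) ^ 2 * exp (l * Y (φ k x))) := by
    simp only [mul_sum, ← sum_add_distrib]
    exact sum_congr rfl fun x _ => sum_congr rfl fun k _ => by ring
  rw [hlhs, ← hlin] at hterm
  rw [hrhs, ← hsq] at hterm
  linarith

end Exchangeable

theorem sum_exp_mul_le_card_mul_exp_sq {α : Type*} (T : Finset α) (Y : α → ℝ) (V : ℝ)
    (h : ∀ l, 0 < l → ∑ x ∈ T, Y x * exp (l * Y x) ≤ l * V * ∑ x ∈ T, exp (l * Y x))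
    {t : ℝ} (ht : 0 ≤ t) :
    ∑ x ∈ T, exp (t * Y x) ≤ #T * exp (t ^ 2 * V / 2) := by
  let g : ℝ → ℝ := fun l => ∑ x ∈ T, exp (l * Y x - l ^ 2 * V / 2)
  have hg : ∀ l, HasDerivAt g (exp (-(l ^ 2 * V / 2)) *
      (∑ x ∈ T, Y x * exp (l * Y x) - l * V * ∑ x ∈ T, exp (l * Y x))) l := fun l => by
    refine (HasDerivAt.fun_sum fun x _ => ((((hasDerivAt_id' l).mul_const (Y x)).sub
      (((hasDerivAt_pow 2 l).mul_const V).div_const 2))).exp).congr_deriv ?_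
    simp only [mul_sub, mul_sum, ← sum_sub_distrib]
    refine sum_congr rfl fun x _ => ?_
    rw [Pi.sub_apply, sub_eq_add_neg (l * Y x), exp_add]
    push_cast
    ring
  have hg_anti : AntitoneOn g (Set.Ici 0) := by
    refine antitoneOn_of_deriv_nonpos (convex_Ici 0)
      (fun l _ => (hg l).continuousAt.continuousWithinAt)
      (fun l _ => (hg l).differentiableAt.differentiableWithinAt) fun l hl => ?_
    rw [interior_Ici] at hl
    rw [(hg l).deriv]
    exact mul_nonpos_of_nonneg_of_nonpos (exp_pos _).le (sub_nonpos.2 (h l hl))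
  have hgt := hg_anti Set.self_mem_Ici ht ht
  simp only [g, zero_mul, zero_pow two_ne_zero, zero_div, sub_zero, exp_zero,
    sum_const, nsmul_one] at hgt
  calc ∑ x ∈ T, exp (t * Y x)
      = (∑ x ∈ T, exp (t * Y x - t ^ 2 * V / 2)) * exp (t ^ 2 * V / 2) := by
        rw [sum_mul]
        exact sum_congr rfl fun x _ => by rw [← exp_add, sub_add_cancel]
    _ ≤ #T * exp (t ^ 2 * V / 2) := by gcongr

theorem Fintype.sum_sum_sub_mul_sub {ι : Type*} [Fintype ι] (f g : ι → ℝ) :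
    ∑ i, ∑ j, (f i - f j) * (g i - g j)
      = 2 * (Fintype.card ι * ∑ i, f i * g i - (∑ i, f i) * ∑ i, g i) := by
  simp only [sub_mul, mul_sub, sum_sub_distrib, sum_const, card_univ, nsmul_eq_mul, ← mul_sum,
    ← sum_mul]
  ring

theorem involutive_comp_swap {ι β : Type*} [DecidableEq ι] (i j : ι) :
    Function.Involutive fun x : ι → β => x ∘ Equiv.swap i j := fun x => by
  ext k
  simp

section Slice

variable {ι : Type*} [Fintype ι]

def trueSet (x : ι → Bool) : Finset ι := univ.filter fun i => x i = true

def selectSum (a : ι → ℝ) (x : ι → Bool) : ℝ := ∑ i, if x i then a i else 0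

theorem card_trueSet_comp_perm (x : ι → Bool) (σ : Equiv.Perm ι) :
    #(trueSet (x ∘ σ)) = #(trueSet x) := by
  simp only [trueSet, card_filter]
  exact Equiv.sum_comp σ fun i => if x i = true then 1 else 0

variable [DecidableEq ι]

variable (ι) in
def boolSlice (s : ℕ) : Finset (ι → Bool) := univ.filter fun x => #(trueSet x) = s

theorem comp_swap_mem_boolSlice {s : ℕ} (i j : ι) {x : ι → Bool} (hx : x ∈ boolSlice ι s) :
    x ∘ Equiv.swap i j ∈ boolSlice ι s := by
  simpa only [boolSlice, mem_filter, mem_univ, true_and, card_trueSet_comp_perm] using hx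

theorem selectSum_sub_selectSum_comp_swap (a : ι → ℝ) (x : ι → Bool) (i j : ι) :
    selectSum a x - selectSum a (x ∘ Equiv.swap i j)
      = ((x i).toNat - (x j).toNat : ℝ) * (a i - a j) := by
  obtain rfl | hij := eq_or_ne i j
  · simp
  rw [selectSum, selectSum, ← sum_sub_distrib, Fintype.sum_eq_add i j hij]
  · simp only [Function.comp_apply, Equiv.swap_apply_left, Equiv.swap_apply_right]
    cases x i <;> cases x j <;> simp <;> ring
  · rintro k ⟨hki, hkj⟩
    simp [Equiv.swap_apply_of_ne_of_ne hki hkj]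

theorem sum_sum_selectSum_sub_comp_swap (a : ι → ℝ) {s : ℕ} {x : ι → Bool}
    (hx : x ∈ boolSlice ι s) :
    ∑ i, ∑ j, (selectSum a x - selectSum a (x ∘ Equiv.swap i j))
      = 2 * (Fintype.card ι * selectSum a x - s * ∑ i, a i) := by
  simp only [selectSum_sub_selectSum_comp_swap, Fintype.sum_sum_sub_mul_sub]
  have hs : ∑ i, ((x i).toNat : ℝ) = s := by
    rw [← (mem_filter.1 hx).2, trueSet, card_filter]
    push_cast
    exact sum_congr rfl fun i _ => by cases x i <;> simp
  have hX : ∑ i, ((x i).toNat : ℝ) * a i = selectSum a x :=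
    sum_congr rfl fun i _ => by cases x i <;> simp
  rw [hs, hX]

theorem sum_sum_sq_selectSum_sub_comp_swap_le (a : ι → ℝ) (x : ι → Bool) :
    ∑ i, ∑ j, (selectSum a x - selectSum a (x ∘ Equiv.swap i j)) ^ 2
      ≤ 2 * (Fintype.card ι * ∑ i, a i ^ 2 - (∑ i, a i) ^ 2) := by
  have h := Fintype.sum_sum_sub_mul_sub a a
  simp only [← sq] at h
  rw [← h]
  refine sum_le_sum fun i _ => sum_le_sum fun j _ => ?_
  rw [selectSum_sub_selectSum_comp_swap, mul_pow]
  refine mul_le_of_le_one_left (sq_nonneg _) ?_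
  cases x i <;> cases x j <;> simp

noncomputable def sliceMean (a : ι → ℝ) (s : ℕ) : ℝ :=
  (∑ x ∈ boolSlice ι s, selectSum a x) / #(boolSlice ι s)

theorem card_mul_sliceMean (a : ι → ℝ) {s : ℕ} (hT : (boolSlice ι s).Nonempty) :
    Fintype.card ι * sliceMean a s = s * ∑ i, a i := by
  have h := sum_sum_sub_involutive_eq_zero (T := boolSlice ι s)
    (fun (ij : ι × ι) _ => comp_swap_mem_boolSlice ij.1 ij.2)
    (fun ij => involutive_comp_swap ij.1 ij.2) (selectSum a)
  simp only [Fintype.sum_prod_type] at h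
  rw [sum_congr rfl fun x hx => sum_sum_selectSum_sub_comp_swap a hx, ← mul_sum,
    sum_sub_distrib, sum_const, ← mul_sum, nsmul_eq_mul] at h
  have hT' : (0 : ℝ) < #(boolSlice ι s) := by exact_mod_cast hT.card_pos
  rw [sliceMean, mul_div_assoc', div_eq_iff hT'.ne']
  linarith

theorem sum_sum_selectSum_sub_comp_swap_eq_mul_sub_sliceMean (a : ι → ℝ) {s : ℕ}
    {x : ι → Bool} (hx : x ∈ boolSlice ι s) :
    ∑ i, ∑ j, (selectSum a x - selectSum a (x ∘ Equiv.swap i j))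
      = 2 * Fintype.card ι * (selectSum a x - sliceMean a s) := by
  rw [sum_sum_selectSum_sub_comp_swap a hx, ← card_mul_sliceMean a ⟨x, hx⟩]
  ring

theorem sum_sub_sliceMean_mul_exp_le (a : ι → ℝ) (s : ℕ) {l : ℝ} (hl : 0 ≤ l) :
    ∑ x ∈ boolSlice ι s, (selectSum a x - sliceMean a s) *
        exp (l * (selectSum a x - sliceMean a s))
      ≤ l * ((∑ i, a i ^ 2 - (∑ i, a i) ^ 2 / Fintype.card ι) / 2) *
        ∑ x ∈ boolSlice ι s, exp (l * (selectSum a x - sliceMean a s)) := by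
  rcases isEmpty_or_nonempty ι with hι | hι
  · simp [selectSum, sliceMean]
  set μ := sliceMean a s
  set X := selectSum a
  have hn : (0 : ℝ) < Fintype.card ι := by exact_mod_cast Fintype.card_pos
  have hexch := sum_sum_sub_involutive_mul_exp_le (T := boolSlice ι s)
    (fun (ij : ι × ι) _ => comp_swap_mem_boolSlice ij.1 ij.2)
    (fun ij => involutive_comp_swap ij.1 ij.2) (fun x => X x - μ) hl
  simp only [sub_sub_sub_cancel_right, Fintype.sum_prod_type] at hexch
  have hlin : ∑ x ∈ boolSlice ι s, ∑ i, ∑ j,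
        (X x - X (x ∘ Equiv.swap i j)) * exp (l * (X x - μ))
      = 2 * Fintype.card ι * ∑ x ∈ boolSlice ι s, (X x - μ) * exp (l * (X x - μ)) := by
    rw [mul_sum]
    refine sum_congr rfl fun x hx => ?_
    simp only [← sum_mul]
    rw [sum_sum_selectSum_sub_comp_swap_eq_mul_sub_sliceMean a hx, mul_assoc]
  have hsq : ∑ x ∈ boolSlice ι s, ∑ i, ∑ j,
        (X x - X (x ∘ Equiv.swap i j)) ^ 2 * exp (l * (X x - μ))
      ≤ 2 * (Fintype.card ι * ∑ i, a i ^ 2 - (∑ i, a i) ^ 2) *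
        ∑ x ∈ boolSlice ι s, exp (l * (X x - μ)) := by
    rw [mul_sum]
    refine sum_le_sum fun x _ => ?_
    simp only [← sum_mul]
    exact mul_le_mul_of_nonneg_right (sum_sum_sq_selectSum_sub_comp_swap_le a x) (exp_pos _).le
  have hη : Fintype.card ι * ∑ i, a i ^ 2 - (∑ i, a i) ^ 2
      = Fintype.card ι * (∑ i, a i ^ 2 - (∑ i, a i) ^ 2 / Fintype.card ι) := by
    field_simp
  rw [hlin] at hexch
  rw [hη] at hsq
  refine le_of_mul_le_mul_left ?_ (by positivity : (0 : ℝ) < 2 * Fintype.card ι)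
  calc _ ≤ _ := hexch
    _ ≤ _ := mul_le_mul_of_nonneg_left hsq (by positivity)
    _ = _ := by ring

theorem sum_exp_sub_sliceMean_le (a : ι → ℝ) (s : ℕ) :
    ∑ x ∈ boolSlice ι s, exp (selectSum a x - sliceMean a s)
      ≤ #(boolSlice ι s) * exp ((∑ i, a i ^ 2 - (∑ i, a i) ^ 2 / Fintype.card ι) / 4) := by
  have h := sum_exp_mul_le_card_mul_exp_sq (boolSlice ι s)
    (fun x => selectSum a x - sliceMean a s) _
    (fun l hl => sum_sub_sliceMean_mul_exp_le a s hl.le) zero_le_one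
  simp only [one_mul, one_pow] at h
  convert h using 3
  ring

end Slice

/-- If X = Σ a_i ξ_i with ξ uniform on the 0/1 vectors with exactly s ones and
η² = Σ a_i² − (Σ a_i)²/n, then E exp(X − E X) ≤ 2 exp(C η²) for an absolute constant C. -/
theorem slice_exp_moment :
    ∃ C : ℝ, 0 < C ∧ ∀ (n s : ℕ), s ≤ n → ∀ a : Fin n → ℝ,
    let T : Finset (Fin n → Bool) :=
      Finset.univ.filter fun x => (Finset.univ.filter fun i => x i = true).card = s
    let X : (Fin n → Bool) → ℝ := fun x => ∑ i, if x i then a i else 0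
    let EX : ℝ := (∑ x ∈ T, X x) / T.card
    let η2 : ℝ := ∑ i, (a i) ^ 2 - (∑ i, a i) ^ 2 / n
    (∑ x ∈ T, Real.exp (X x - EX)) / T.card ≤ 2 * Real.exp (C * η2) := by
  refine ⟨1 / 4, by norm_num, fun n s _ a => ?_⟩
  intro T X EX η2
  have h := sum_exp_sub_sliceMean_le a s
  rw [Fintype.card_fin] at h
  refine div_le_of_le_mul₀ (Nat.cast_nonneg _) (by positivity) ?_
  calc ∑ x ∈ T, exp (X x - EX) ≤ T.card * exp (η2 / 4) := h
    _ = 1 * exp (1 / 4 * η2) * T.card := by ring_nf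
    _ ≤ 2 * exp (1 / 4 * η2) * T.card := by gcongr; norm_num
end

section
/- The three-dimensional Gaussian integral identity: for all x', y' ∈ ℝ, (1/(π²√(π−1))) ∫_{ℝ³} exp( −(1/(2π))(x'−β₀+β₂)² − (1/(2π))(y'−β₁+β₂)² − (1/(4π(π−1)))(x'−y'+β₁−β₀)² − (β₀²+β₁²+2β₂²)/2 ) dβ₀ dβ₁ dβ₂ = (2/√(π(2+π))) · exp( −((1+π)x'² − 2x'y' + (1+π)y'²)/(2π(2+π)) ). -/
open MeasureTheory Real

/-! Completing the square successively in `b₂`, `b₁`, `b₀` writes the exponent as the exponent of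
the right-hand side minus `a₀ (b₀ - m₀)² + a₁ (b₁ - m₁ b₀)² + a₂ (b₂ - m₂ (b₀, b₁))²` with all
`aᵢ > 0`. By translation invariance every one-dimensional Gaussian factor integrates to `√(π / aᵢ)`
whatever its centre, so Fubini gives `√(π / a₀) √(π / a₁) √(π / a₂)`; integrability comes for free
because the integrand is positive and its iterated integrals are finite. Finally
`a₀ a₁ a₂ = (2 + π) / (4 (π - 1))` turns the prefactor into `2 / √(π (2 + π))`. -/

theorem integrable_prod_of_nonneg {α β : Type*} [MeasurableSpace α] [MeasurableSpace β]
    {μ : Measure α} {ν : Measure β} [SFinite ν] {F : α × β → ℝ} (hF₀ : 0 ≤ F)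
    (hF : AEStronglyMeasurable F (μ.prod ν)) (h_slice : ∀ x, Integrable (fun y => F (x, y)) ν)
    (h_int : Integrable (fun x => ∫ y, F (x, y) ∂ν) μ) : Integrable F (μ.prod ν) := by
  refine (integrable_prod_iff hF).2 ⟨Filter.Eventually.of_forall h_slice, ?_⟩
  simpa only [norm_of_nonneg (hF₀ _)] using h_int

theorem integral_exp_neg_mul_sq_sub (a m : ℝ) : ∫ t : ℝ, exp (-a * (t - m) ^ 2) = √(π / a) := by
  rw [integral_sub_right_eq_self (fun t => exp (-a * t ^ 2)) m, integral_gaussian]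

theorem integrable_and_integral_exp_neg_mul_sq_sub_mul {β : Type*} [MeasurableSpace β]
    {ν : Measure β} [SFinite ν] {a c : ℝ} (ha : 0 < a) (m : ℝ) {G : ℝ × β → ℝ} (hG₀ : 0 ≤ G)
    (hG : AEStronglyMeasurable G (volume.prod ν)) (h_slice : ∀ x, Integrable (fun y => G (x, y)) ν)
    (h_slice_integral : ∀ x, ∫ y, G (x, y) ∂ν = c) :
    Integrable (fun p => exp (-a * (p.1 - m) ^ 2) * G p) (volume.prod ν) ∧
      ∫ p, exp (-a * (p.1 - m) ^ 2) * G p ∂(volume.prod ν) = √(π / a) * c := by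
  have h_gauss : Integrable (fun t : ℝ => exp (-a * (t - m) ^ 2)) :=
    (integrable_exp_neg_mul_sq ha).comp_sub_right m
  have h_inner : ∀ x, ∫ y, exp (-a * (x - m) ^ 2) * G (x, y) ∂ν = exp (-a * (x - m) ^ 2) * c :=
    fun x => by rw [integral_const_mul, h_slice_integral]
  have h_int : Integrable (fun p => exp (-a * (p.1 - m) ^ 2) * G p) (volume.prod ν) := by
    refine integrable_prod_of_nonneg (fun p => mul_nonneg (exp_nonneg _) (hG₀ p))
      (AEStronglyMeasurable.mul (by fun_prop) hG)
      (fun x => (h_slice x).const_mul (exp (-a * (x - m) ^ 2))) ?_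
    simpa only [h_inner] using h_gauss.mul_const c
  refine ⟨h_int, ?_⟩
  rw [integral_prod _ h_int]
  simp only [h_inner, integral_mul_const, integral_exp_neg_mul_sq_sub]

theorem integrable_and_integral_exp_neg_triangular₂ {a₁ a₂ : ℝ} (ha₁ : 0 < a₁) (ha₂ : 0 < a₂)
    (m₁ : ℝ) {m₂ : ℝ → ℝ} (hm₂ : Measurable m₂) :
    Integrable (fun q : ℝ × ℝ => exp (-a₁ * (q.1 - m₁) ^ 2) * exp (-a₂ * (q.2 - m₂ q.1) ^ 2)) ∧
      ∫ q : ℝ × ℝ, exp (-a₁ * (q.1 - m₁) ^ 2) * exp (-a₂ * (q.2 - m₂ q.1) ^ 2)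
        = √(π / a₁) * √(π / a₂) := by
  rw [Measure.volume_eq_prod]
  exact integrable_and_integral_exp_neg_mul_sq_sub_mul ha₁ m₁
    (G := fun q => exp (-a₂ * (q.2 - m₂ q.1) ^ 2)) (fun _ => exp_nonneg _)
    (Measurable.aestronglyMeasurable (by fun_prop))
    (fun x => (integrable_exp_neg_mul_sq ha₂).comp_sub_right (m₂ x))
    (fun x => integral_exp_neg_mul_sq_sub a₂ (m₂ x))

theorem integral_exp_neg_triangular₃ {a₀ a₁ a₂ : ℝ} (ha₀ : 0 < a₀) (ha₁ : 0 < a₁) (ha₂ : 0 < a₂)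
    (m₀ : ℝ) {m₁ : ℝ → ℝ} {m₂ : ℝ × ℝ → ℝ} (hm₁ : Measurable m₁) (hm₂ : Measurable m₂) :
    ∫ b : ℝ × ℝ × ℝ, exp (-a₀ * (b.1 - m₀) ^ 2) *
        (exp (-a₁ * (b.2.1 - m₁ b.1) ^ 2) * exp (-a₂ * (b.2.2 - m₂ (b.1, b.2.1)) ^ 2))
      = √(π / a₀) * (√(π / a₁) * √(π / a₂)) := by
  have h_slice (x : ℝ) := integrable_and_integral_exp_neg_triangular₂ ha₁ ha₂ (m₁ x)
    (m₂ := fun t => m₂ (x, t)) (by fun_prop)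
  rw [Measure.volume_eq_prod]
  exact (integrable_and_integral_exp_neg_mul_sq_sub_mul ha₀ m₀ (ν := volume)
    (G := fun b : ℝ × ℝ × ℝ =>
      exp (-a₁ * (b.2.1 - m₁ b.1) ^ 2) * exp (-a₂ * (b.2.2 - m₂ (b.1, b.2.1)) ^ 2))
    (fun _ => mul_nonneg (exp_nonneg _) (exp_nonneg _))
    (Measurable.aestronglyMeasurable (by fun_prop)) (fun x => (h_slice x).1)
    (fun x => (h_slice x).2)).2

theorem gaussian_triple_exponent_eq (x y b₀ b₁ b₂ : ℝ) :
    -(x - b₀ + b₂) ^ 2 / (2 * π) - (y - b₁ + b₂) ^ 2 / (2 * π)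
        - (x - y + b₁ - b₀) ^ 2 / (4 * π * (π - 1)) - (b₀ ^ 2 + b₁ ^ 2 + 2 * b₂ ^ 2) / 2
      = -((1 + π) * x ^ 2 - 2 * x * y + (1 + π) * y ^ 2) / (2 * π * (2 + π))
        + (-(π * (2 + π) / (2 * (π ^ 2 + π - 1))) * (b₀ - ((1 + π) * x - y) / (π * (2 + π))) ^ 2
        + (-((π ^ 2 + π - 1) / (2 * (π ^ 2 - 1))) * (b₁ - (b₀ - x + π * y) / (π ^ 2 + π - 1)) ^ 2
        + -((1 + π) / π) * (b₂ - (b₀ + b₁ - x - y) / (2 * (1 + π))) ^ 2)) := by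
  have hπ : 1 < π := by linarith [pi_gt_three]
  have : π - 1 ≠ 0 := by linarith
  have : π ^ 2 - 1 ≠ 0 := by nlinarith
  have : π * (π + 1) - 1 ≠ 0 := by nlinarith
  field_simp
  ring

theorem gaussian_triple_constant :
    1 / (π ^ 2 * √(π - 1)) * (√(π / (π * (2 + π) / (2 * (π ^ 2 + π - 1))))
        * (√(π / ((π ^ 2 + π - 1) / (2 * (π ^ 2 - 1)))) * √(π / ((1 + π) / π))))
      = 2 / √(π * (2 + π)) := by
  have hπ : 1 < π := by linarith [pi_gt_three]
  have h₁ : 0 < π ^ 2 - 1 := by nlinarith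
  have h₂ : 0 < π ^ 2 + π - 1 := by nlinarith
  have : π - 1 ≠ 0 := by linarith
  have : π * (π + 1) - 1 ≠ 0 := by nlinarith
  have h₃ : 0 ≤ π / (π * (2 + π) / (2 * (π ^ 2 + π - 1))) :=
    div_nonneg pi_pos.le (div_pos (by positivity) (by linarith)).le
  have h₄ : 0 ≤ π / ((π ^ 2 + π - 1) / (2 * (π ^ 2 - 1))) :=
    div_nonneg pi_pos.le (div_pos h₂ (by linarith)).le
  refine (sq_eq_sq₀ (by positivity) (by positivity)).1 ?_
  simp only [mul_pow, div_pow, sq_sqrt h₃, sq_sqrt h₄,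
    sq_sqrt (by positivity : 0 ≤ π / ((1 + π) / π)), sq_sqrt (by linarith : 0 ≤ π - 1),
    sq_sqrt (by positivity : 0 ≤ π * (2 + π))]
  field_simp
  ring

/-- The three-dimensional Gaussian integral identity used in the day-one analysis. -/
theorem gaussian_triple_integral (x' y' : ℝ) :
    (1 / (π ^ 2 * Real.sqrt (π - 1))) *
      ∫ b : ℝ × ℝ × ℝ,
        Real.exp (-(x' - b.1 + b.2.2) ^ 2 / (2 * π) - (y' - b.2.1 + b.2.2) ^ 2 / (2 * π)
          - (x' - y' + b.2.1 - b.1) ^ 2 / (4 * π * (π - 1))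
          - (b.1 ^ 2 + b.2.1 ^ 2 + 2 * b.2.2 ^ 2) / 2)
    = (2 / Real.sqrt (π * (2 + π))) *
        Real.exp (-((1 + π) * x' ^ 2 - 2 * x' * y' + (1 + π) * y' ^ 2) / (2 * π * (2 + π))) := by
  have hπ : 1 < π := by linarith [pi_gt_three]
  have h_gauss := integral_exp_neg_triangular₃
    (div_pos (by positivity) (by nlinarith) : 0 < π * (2 + π) / (2 * (π ^ 2 + π - 1)))
    (div_pos (by nlinarith) (by nlinarith) : 0 < (π ^ 2 + π - 1) / (2 * (π ^ 2 - 1)))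
    (by positivity : 0 < (1 + π) / π) (((1 + π) * x' - y') / (π * (2 + π)))
    (m₁ := fun b₀ => (b₀ - x' + π * y') / (π ^ 2 + π - 1))
    (m₂ := fun q => (q.1 + q.2 - x' - y') / (2 * (1 + π))) (by fun_prop) (by fun_prop)
  simp_rw [gaussian_triple_exponent_eq, exp_add, integral_const_mul, h_gauss]
  rw [mul_left_comm, gaussian_triple_constant, mul_comm]
end
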